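/- Define T(n,s,i,b₀) as the number of s-element subsets γ = {γ₁ < ... < γ_s} of {1,...,n} with exactly i indices j such that γⱼ ≠ b₀ + 2j − 1. Then for 0 ≤ i ≤ s ≤ ⌊(n-1)/2⌋ and 1 ≤ b₀ ≤ n − 2s − 1, T(n,s,i,b₀) = T(n,s,i,b₀+1). -/

import Mathlib

/-!
Let `D n s b = offHomeCounts n s b` be the multiset of off-home counts of the `s`-subsets of
`{1, …, n}`. Splitting according to whether the position `n` is used gives
`D n (s+1) b = D (n-1) (s+1) b + (D (n-1) s b).map (· + 1)`, because `n` is not the home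
`b + 2s + 1` of the last mark. Splitting according to whether the position `1` is used, and
shifting everything else down by one, gives
`D n (s+1) (b+1) = D (n-1) (s+1) b + (D (n-1) s (b+2)).map (· + 1)`, because `1` is never the home
of the first mark when the barrier starts at `b + 1`. Induction on `s`, applied at the barriers
`b` and `b + 1`, identifies the two right-hand sides.
-/

/-- Number of marks not at home w.r.t. barrier start `b0`: indices `j` (0-indexed)
with `γⱼ₊₁ ≠ b0 + 2(j+1) - 1`. -/
def natCountB (b0 : ℕ) (γ : Finset ℕ) : ℕ :=
  ((Finset.range γ.card).filter fun j => (γ.sort (· ≤ ·)).getD j 0 ≠ b0 + 2 * j + 1).card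

/-- `T n s i b0` counts the `s`-element subsets of `{1,…,n}` with exactly `i` marks
not at home with respect to barrier start `b0`. -/
def T (n s i b0 : ℕ) : ℕ :=
  (((Finset.Icc 1 n).powersetCard s).filter fun γ => natCountB b0 γ = i).card

open Finset

theorem Finset.sort_insert_of_forall_lt {α : Type*} [LinearOrder α] {s : Finset α} {a : α}
    (h : ∀ x ∈ s, x < a) : (insert a s).sort (· ≤ ·) = s.sort (· ≤ ·) ++ [a] := by
  have hl : (s.sort (· ≤ ·) ++ [a]).Pairwise (· < ·) :=
    List.pairwise_append.2 ⟨s.sortedLT_sort.pairwise, by simp, by simpa using h⟩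
  rw [show insert a s = (s.sort (· ≤ ·) ++ [a]).toFinset by ext; simp]
  exact (List.toFinset_sort _ hl.nodup).2 (hl.imp le_of_lt)

theorem Finset.map_powersetCard_succ_insert_val {α β : Type*} [DecidableEq α] {s : Finset α}
    {a : α} (ha : a ∉ s) (k : ℕ) (f : Finset α → β) :
    ((insert a s).powersetCard (k + 1)).val.map f =
      (s.powersetCard (k + 1)).val.map f + (s.powersetCard k).val.map (f ∘ insert a) := by
  have hdisj : Disjoint (s.powersetCard (k + 1)) ((s.powersetCard k).image (insert a)) := by
    refine disjoint_left.2 fun γ hγ hγ' => ?_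
    obtain ⟨δ, -, rfl⟩ := mem_image.1 hγ'
    exact ha ((mem_powersetCard.1 hγ).1 (mem_insert_self a δ))
  have hinj : Set.InjOn (insert a) (s.powersetCard k : Set (Finset α)) := fun δ hδ δ' hδ' h => by
    rw [← erase_insert (fun h' => ha ((mem_powersetCard.1 hδ).1 h')),
      ← erase_insert (fun h' => ha ((mem_powersetCard.1 hδ').1 h')), h]
  rw [powersetCard_succ_insert ha, ← disjUnion_eq_union _ _ hdisj, disjUnion_val,
    Multiset.map_add, image_val_of_injOn hinj, Multiset.map_map]

def offHomeCount (b : ℕ) (l : List ℕ) : ℕ :=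
  #{j ∈ range l.length | l.getD j 0 ≠ b + 2 * j + 1}

theorem natCountB_eq_offHomeCount (b : ℕ) (γ : Finset ℕ) :
    natCountB b γ = offHomeCount b (γ.sort (· ≤ ·)) := by
  rw [natCountB, offHomeCount, length_sort]

@[simp]
theorem offHomeCount_nil (b : ℕ) : offHomeCount b [] = 0 := rfl

theorem offHomeCount_cons (b x : ℕ) (l : List ℕ) :
    offHomeCount b (x :: l) = offHomeCount (b + 2) l + if x = b + 1 then 0 else 1 := by
  simp only [offHomeCount, card_filter, List.length_cons, sum_range_succ', List.getD_cons_succ,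
    List.getD_cons_zero]
  congr 1
  · refine sum_congr rfl fun j _ => ?_
    rw [show b + 2 * (j + 1) + 1 = b + 2 + 2 * j + 1 by ring]
  · simp only [mul_zero, add_zero, ne_eq, ite_not]

theorem offHomeCount_map_succ (b : ℕ) (l : List ℕ) :
    offHomeCount (b + 1) (l.map (· + 1)) = offHomeCount b l := by
  induction l generalizing b with
  | nil => rfl
  | cons x l ih => simp [offHomeCount_cons, ← ih]

theorem offHomeCount_append_singleton (b x : ℕ) (l : List ℕ) :
    offHomeCount b (l ++ [x]) = offHomeCount b l + if x = b + 2 * l.length + 1 then 0 else 1 := by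
  induction l generalizing b with
  | nil => simp [offHomeCount_cons]
  | cons y l ih =>
    rw [List.cons_append, offHomeCount_cons, offHomeCount_cons, ih, List.length_cons,
      show b + 2 + 2 * l.length = b + 2 * (l.length + 1) by ring]
    ring

theorem natCountB_insert_of_forall_gt (b : ℕ) {δ : Finset ℕ} {x : ℕ} (h : ∀ y ∈ δ, x < y) :
    natCountB b (insert x δ) = natCountB (b + 2) δ + if x = b + 1 then 0 else 1 := by
  rw [natCountB_eq_offHomeCount, natCountB_eq_offHomeCount,
    sort_insert _ (fun y hy => (h y hy).le) (fun hx => lt_irrefl x (h x hx)), offHomeCount_cons]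

theorem natCountB_insert_of_forall_lt (b : ℕ) {δ : Finset ℕ} {x : ℕ} (h : ∀ y ∈ δ, y < x) :
    natCountB b (insert x δ) = natCountB b δ + if x = b + 2 * #δ + 1 then 0 else 1 := by
  rw [natCountB_eq_offHomeCount, natCountB_eq_offHomeCount, sort_insert_of_forall_lt h,
    offHomeCount_append_singleton, length_sort]

theorem natCountB_map_succ (b : ℕ) (δ : Finset ℕ) :
    natCountB (b + 1) (δ.map (addRightEmbedding 1)) = natCountB b δ := by
  rw [natCountB_eq_offHomeCount, natCountB_eq_offHomeCount, ← offHomeCount_map_succ b]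
  congr 1
  exact (map_sort _ _ _ _ fun x _ y _ => by simp).symm

def offHomeCounts (n s b : ℕ) : Multiset ℕ :=
  ((Icc 1 n).powersetCard s).val.map (natCountB b)

theorem T_eq_count (n s i b : ℕ) : T n s i b = (offHomeCounts n s b).count i := by
  simp only [T, offHomeCounts, Multiset.count_map, card_def, filter_val, eq_comm]

theorem offHomeCounts_zero (n b : ℕ) : offHomeCounts n 0 b = {0} := by
  simp [offHomeCounts, natCountB]

theorem offHomeCounts_succ_succ_of_ne {m s b : ℕ} (h : m + 1 ≠ b + 2 * s + 1) :
    offHomeCounts (m + 1) (s + 1) b =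
      offHomeCounts m (s + 1) b + (offHomeCounts m s b).map (· + 1) := by
  rw [offHomeCounts, ← insert_Icc_right_eq_Icc_add_one (by omega),
    map_powersetCard_succ_insert_val (by simp), offHomeCounts, offHomeCounts, Multiset.map_map]
  congr 1
  refine Multiset.map_congr rfl fun δ hδ => ?_
  obtain ⟨hsub, hcard⟩ := mem_powersetCard.1 (mem_def.2 hδ)
  rw [Function.comp_apply, Function.comp_apply, natCountB_insert_of_forall_lt b
    (fun y hy => Nat.lt_add_one_of_le (mem_Icc.1 (hsub hy)).2), hcard, if_neg h]

theorem offHomeCounts_succ_succ_barrier_succ (m s b : ℕ) :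
    offHomeCounts (m + 1) (s + 1) (b + 1) =
      offHomeCounts m (s + 1) b + (offHomeCounts m s (b + 2)).map (· + 1) := by
  have hIcc : Icc 1 (m + 1) = insert 1 ((Icc 1 m).map (addRightEmbedding 1)) := by
    rw [map_add_right_Icc, insert_Icc_add_one_left_eq_Icc (by omega)]
  rw [offHomeCounts, hIcc, map_powersetCard_succ_insert_val (by simp), powersetCard_map,
    powersetCard_map, map_val, map_val, Multiset.map_map, Multiset.map_map, offHomeCounts,
    offHomeCounts, Multiset.map_map]
  congr 1
  · exact Multiset.map_congr rfl fun δ _ => natCountB_map_succ b δ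
  · refine Multiset.map_congr rfl fun δ hδ => ?_
    have hone_lt : ∀ y ∈ δ.map (addRightEmbedding 1), 1 < y := by
      intro y hy
      obtain ⟨x, hx, rfl⟩ := mem_map.1 hy
      have := (mem_Icc.1 ((mem_powersetCard.1 (mem_def.2 hδ)).1 hx)).1
      rw [addRightEmbedding_apply]
      omega
    simp only [Function.comp_apply, RelEmbedding.coe_toEmbedding, mapEmbedding_apply]
    rw [natCountB_insert_of_forall_gt _ hone_lt, natCountB_map_succ, if_neg (by omega)]

theorem offHomeCounts_barrier_succ {n s b : ℕ} (h : b + 2 * s + 1 ≤ n) :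
    offHomeCounts n s b = offHomeCounts n s (b + 1) := by
  induction s generalizing n b with
  | zero => rw [offHomeCounts_zero, offHomeCounts_zero]
  | succ s ih =>
    obtain ⟨m, rfl⟩ : ∃ m, n = m + 1 := ⟨n - 1, by omega⟩
    rw [offHomeCounts_succ_succ_of_ne (by omega), offHomeCounts_succ_succ_barrier_succ,
      ih (b := b) (by omega), ih (b := b + 1) (by omega)]

theorem stmt6_general (n s i b0 : ℕ) (h3 : 1 ≤ b0) (h4 : b0 ≤ n - 2 * s - 1) :
    T n s i b0 = T n s i (b0 + 1) := by
  rw [T_eq_count, T_eq_count, offHomeCounts_barrier_succ (by omega)]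

theorem stmt6 (n s i b0 : ℕ) (h1 : i ≤ s) (h2 : s ≤ (n - 1) / 2)
    (h3 : 1 ≤ b0) (h4 : b0 ≤ n - 2 * s - 1) :
    T n s i b0 = T n s i (b0 + 1) :=
  stmt6_general n s i b0 h3 h4
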